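/- arXiv:0707.3715 — 6 statements merged into one kernel-verified Lean document; each statement's English description precedes it below -/
import Mathlib

section
/- Let X be a square integrable real random variable with mean zero and variance σ² > 0. Then for all real t, E[exp(tX − (t²/2)X²)] ≤ 1 + (t²/2)σ². -/
/-!
Pointwise, with `y = t x` and `u = y - y² / 2 < 1`, the bound `exp u ≤ 1 / (1 - u)` combined with
`(1 + y + y² / 2) (1 - y + y² / 2) = 1 + y⁴ / 4 ≥ 1` gives `exp (y - y² / 2) ≤ 1 + y + y² / 2`.
Taking expectations, the linear term vanishes because `X` is centred.
-/

open MeasureTheory ProbabilityTheory Real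

namespace Real

lemma exp_mul_one_sub_le_one (u : ℝ) : exp u * (1 - u) ≤ 1 :=
  calc exp u * (1 - u) ≤ exp u * exp (-u) := by gcongr; exact one_sub_le_exp_neg u
    _ = 1 := by rw [← exp_add, add_neg_cancel, exp_zero]

lemma exp_sub_sq_div_two_le (y : ℝ) : exp (y - y ^ 2 / 2) ≤ 1 + y + y ^ 2 / 2 := by
  have hpos : 0 < 1 - (y - y ^ 2 / 2) := by nlinarith [sq_nonneg (y - 1)]
  have hprod : 1 ≤ (1 + y + y ^ 2 / 2) * (1 - (y - y ^ 2 / 2)) := by nlinarith [sq_nonneg (y ^ 2)]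
  exact le_of_mul_le_mul_right ((exp_mul_one_sub_le_one _).trans hprod) hpos

lemma exp_sub_sq_div_two_le_exp_half (y : ℝ) : exp (y - y ^ 2 / 2) ≤ exp (1 / 2) :=
  exp_le_exp.mpr (by nlinarith [sq_nonneg (y - 1)])

lemma exp_mul_sub_sq_eq (t x : ℝ) :
    exp (t * x - t ^ 2 / 2 * x ^ 2) = exp (t * x - (t * x) ^ 2 / 2) := by
  congr 1; ring

end Real

section

variable {Ω : Type*} {m0 : MeasurableSpace Ω} {μ : Measure Ω} {X : Ω → ℝ}

lemma integrable_exp_mul_sub_sq [IsFiniteMeasure μ] (hX : AEStronglyMeasurable X μ) (t : ℝ) :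
    Integrable (fun ω => exp (t * X ω - t ^ 2 / 2 * X ω ^ 2)) μ := by
  refine .of_bound (by fun_prop) (exp (1 / 2)) (ae_of_all _ fun ω => ?_)
  rw [norm_of_nonneg (exp_pos _).le, exp_mul_sub_sq_eq]
  exact exp_sub_sq_div_two_le_exp_half _

lemma integral_exp_mul_sub_sq_le [IsProbabilityMeasure μ] (hX : MemLp X 2 μ) (t : ℝ) :
    ∫ ω, exp (t * X ω - t ^ 2 / 2 * X ω ^ 2) ∂μ
      ≤ 1 + t * ∫ ω, X ω ∂μ + t ^ 2 / 2 * ∫ ω, X ω ^ 2 ∂μ := by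
  have hX1 : Integrable (fun ω => t * X ω) μ := (hX.integrable one_le_two).const_mul t
  have hA : Integrable (fun ω => 1 + t * X ω) μ := (integrable_const 1).add hX1
  have hX2 : Integrable (fun ω => t ^ 2 / 2 * X ω ^ 2) μ := hX.integrable_sq.const_mul _
  calc ∫ ω, exp (t * X ω - t ^ 2 / 2 * X ω ^ 2) ∂μ
      ≤ ∫ ω, (1 + t * X ω + t ^ 2 / 2 * X ω ^ 2) ∂μ := by
        refine integral_mono (integrable_exp_mul_sub_sq hX.1 t)
          (hA.add hX2) fun ω => ?_
        rw [exp_mul_sub_sq_eq]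
        exact (exp_sub_sq_div_two_le (t * X ω)).trans_eq (by ring)
    _ = 1 + t * ∫ ω, X ω ∂μ + t ^ 2 / 2 * ∫ ω, X ω ^ 2 ∂μ := by
        rw [integral_add hA hX2, integral_add (integrable_const 1) hX1,
          integral_const_mul, integral_const_mul, integral_const, probReal_univ, one_smul]

end

theorem expectation_exp_le_one_add_half_sq_var_general
    {Ω : Type*} {m0 : MeasurableSpace Ω} {μ : Measure Ω} [IsProbabilityMeasure μ]
    {X : Ω → ℝ} (hX : MemLp X 2 μ) (hmean : ∫ ω, X ω ∂μ = 0)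
    {σ2 : ℝ} (hvar : ∫ ω, (X ω) ^ 2 ∂μ = σ2) (t : ℝ) :
    ∫ ω, Real.exp (t * X ω - t ^ 2 / 2 * (X ω) ^ 2) ∂μ ≤ 1 + t ^ 2 / 2 * σ2 := by
  simpa [hmean, hvar] using integral_exp_mul_sub_sq_le hX t

/-- Lemma 2.1: if `X` is square integrable with mean zero and variance `σ² > 0`, then for all
real `t`, `E[exp(t X − (t²/2) X²)] ≤ 1 + (t²/2) σ²`. -/
theorem expectation_exp_le_one_add_half_sq_var
    {Ω : Type*} {m0 : MeasurableSpace Ω} {μ : Measure Ω} [IsProbabilityMeasure μ]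
    {X : Ω → ℝ} (hX : MemLp X 2 μ) (hmean : ∫ ω, X ω ∂μ = 0)
    {σ2 : ℝ} (hvar : ∫ ω, (X ω) ^ 2 ∂μ = σ2) (hσ2 : 0 < σ2) (t : ℝ) :
    ∫ ω, Real.exp (t * X ω - t ^ 2 / 2 * (X ω) ^ 2) ∂μ ≤ 1 + t ^ 2 / 2 * σ2 :=
  expectation_exp_le_one_add_half_sq_var_general (m0 := m0) hX hmean hvar t
end

section
/- Let X be an integrable real random variable that is heavy on left. Then for all t ≥ 0, E[exp(tX − (t²/2)X²)] ≤ 1. -/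
/-!
Put `w a = (2a + a²) e^(-a - a²/2) ≥ 0`, the derivative of `-(1 + a) e^(-a - a²/2)`, while `w a · a`
is the derivative of `-(1 + a + a²) e^(-a - a²/2)`. Splitting at `a = u` gives
`∫₀^∞ w a · min u a da = 1 - e^(-u - u²/2)` for `u ≥ 0`, so the odd function
`G x = sign x · (1 - e^(-|x| - x²/2))` is the mixture `∫₀^∞ w a · T_a x da` of truncations.
By Fubini and heavy-on-left, `E[G (tX)] = ∫₀^∞ w a · E[T_a (tX)] da ≤ 0`, as
`T_a (tX) = t T_(a/t) X`.
Finally `e^(x - x²/2) ≤ 1 + G x`: this is an equality for `x < 0`, and for `x > 0` it is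
`cosh x ≤ e^(x²/2)`.
-/

open MeasureTheory ProbabilityTheory Real

/-- The truncated version `T_a(x) = min(|x|, a) · sign(x)` of a real number. -/
noncomputable def truncAt (a : ℝ) (x : ℝ) : ℝ := min |x| a * Real.sign x

/-- An integrable real random variable `X` is heavy on left if `E[X] = 0` and for all `a > 0`,
`E[T_a(X)] ≤ 0`. -/
def IsHeavyOnLeft {Ω : Type*} [MeasurableSpace Ω] (μ : MeasureTheory.Measure Ω)
    (X : Ω → ℝ) : Prop :=
  (∫ ω, X ω ∂μ) = 0 ∧ ∀ a : ℝ, 0 < a → (∫ ω, truncAt a (X ω) ∂μ) ≤ 0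

open Set Filter Topology

lemma Real.measurable_sign : Measurable Real.sign :=
  Measurable.ite measurableSet_Iio measurable_const
    (Measurable.ite measurableSet_Ioi measurable_const measurable_const)

lemma measurable_truncAt : Measurable (Function.uncurry truncAt) :=
  (measurable_snd.abs.min measurable_fst).mul (Real.measurable_sign.comp measurable_snd)

lemma abs_truncAt_le {a : ℝ} (ha : 0 ≤ a) (x : ℝ) : |truncAt a x| ≤ a := by
  rw [truncAt, abs_mul, abs_of_nonneg (le_min (abs_nonneg x) ha)]
  have hsign : |Real.sign x| ≤ 1 := by
    rcases Real.sign_apply_eq x with h | h | h <;> simp [h]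
  calc min |x| a * |Real.sign x| ≤ a * 1 :=
        mul_le_mul (min_le_right _ _) hsign (abs_nonneg _) ha
    _ = a := mul_one a

lemma truncAt_mul_left {t : ℝ} (ht : 0 < t) (a x : ℝ) :
    truncAt a (t * x) = t * truncAt (a / t) x := by
  have hsign : Real.sign (t * x) = Real.sign x := by
    rcases lt_trichotomy x 0 with hx | rfl | hx
    · rw [Real.sign_of_neg hx, Real.sign_of_neg (mul_neg_of_pos_of_neg ht hx)]
    · simp
    · rw [Real.sign_of_pos hx, Real.sign_of_pos (mul_pos ht hx)]
  have hmin : min (t * |x|) a = t * min |x| (a / t) := by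
    rw [mul_min_of_nonneg _ _ ht.le, mul_div_cancel₀ a ht.ne']
  rw [truncAt, truncAt, hsign, abs_mul, abs_of_pos ht, hmin, mul_assoc]

lemma IsHeavyOnLeft.integral_truncAt_const_mul_nonpos {Ω : Type*} [MeasurableSpace Ω]
    {μ : Measure Ω} {X : Ω → ℝ} (hX : IsHeavyOnLeft μ X) {t a : ℝ} (ht : 0 < t) (ha : 0 < a) :
    ∫ ω, truncAt a (t * X ω) ∂μ ≤ 0 := by
  simp_rw [truncAt_mul_left ht, integral_const_mul]
  exact mul_nonpos_of_nonneg_of_nonpos ht.le (hX.2 _ (div_pos ha ht))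

noncomputable def truncWeight (a : ℝ) : ℝ := (2 * a + a ^ 2) * exp (-a - a ^ 2 / 2)

lemma continuous_truncWeight : Continuous truncWeight := by
  unfold truncWeight; fun_prop

lemma truncWeight_nonneg {a : ℝ} (ha : 0 ≤ a) : 0 ≤ truncWeight a :=
  mul_nonneg (by positivity) (exp_pos _).le

lemma hasDerivAt_exp_neg_sub_sq_half (x : ℝ) :
    HasDerivAt (fun x ↦ exp (-x - x ^ 2 / 2)) (exp (-x - x ^ 2 / 2) * (-1 - x)) x := by
  have h : HasDerivAt (fun x : ℝ ↦ -x - x ^ 2 / 2) (-1 - x) x :=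
    ((hasDerivAt_neg x).sub ((hasDerivAt_pow 2 x).div_const 2)).congr_deriv (by ring)
  exact h.exp

lemma hasDerivAt_neg_one_add_mul_exp (x : ℝ) :
    HasDerivAt (fun x ↦ -((1 + x) * exp (-x - x ^ 2 / 2))) (truncWeight x) x :=
  (((hasDerivAt_id' x).const_add 1).mul (hasDerivAt_exp_neg_sub_sq_half x)).neg.congr_deriv
    (by rw [truncWeight]; ring)

lemma hasDerivAt_neg_one_add_add_sq_mul_exp (x : ℝ) :
    HasDerivAt (fun x ↦ -((1 + x + x ^ 2) * exp (-x - x ^ 2 / 2))) (truncWeight x * x) x :=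
  ((((hasDerivAt_id' x).const_add 1).add (hasDerivAt_pow 2 x)).mul
    (hasDerivAt_exp_neg_sub_sq_half x)).neg.congr_deriv
    (by rw [truncWeight, Pi.add_apply]; ring)

lemma tendsto_pow_mul_exp_neg_sub_sq_half (n : ℕ) :
    Tendsto (fun x : ℝ ↦ x ^ n * exp (-x - x ^ 2 / 2)) atTop (𝓝 0) := by
  refine tendsto_of_tendsto_of_tendsto_of_le_of_le' tendsto_const_nhds
    (tendsto_pow_mul_exp_neg_atTop_nhds_zero n) ?_ ?_
  all_goals filter_upwards [eventually_ge_atTop 0] with x hx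
  · positivity
  · exact mul_le_mul_of_nonneg_left (exp_le_exp.2 (by nlinarith)) (by positivity)

lemma tendsto_neg_one_add_mul_exp :
    Tendsto (fun x : ℝ ↦ -((1 + x) * exp (-x - x ^ 2 / 2))) atTop (𝓝 0) := by
  simpa [add_mul] using ((tendsto_pow_mul_exp_neg_sub_sq_half 0).add
    (tendsto_pow_mul_exp_neg_sub_sq_half 1)).neg

lemma tendsto_neg_one_add_add_sq_mul_exp :
    Tendsto (fun x : ℝ ↦ -((1 + x + x ^ 2) * exp (-x - x ^ 2 / 2))) atTop (𝓝 0) := by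
  simpa [add_mul] using (((tendsto_pow_mul_exp_neg_sub_sq_half 0).add
    (tendsto_pow_mul_exp_neg_sub_sq_half 1)).add (tendsto_pow_mul_exp_neg_sub_sq_half 2)).neg

lemma integral_Ioi_truncWeight {u : ℝ} (hu : 0 ≤ u) :
    ∫ a in Ioi u, truncWeight a = (1 + u) * exp (-u - u ^ 2 / 2) := by
  rw [integral_Ioi_of_hasDerivAt_of_nonneg' (fun x _ ↦ hasDerivAt_neg_one_add_mul_exp x)
    (fun _ hx ↦ truncWeight_nonneg (hu.trans hx.le)) tendsto_neg_one_add_mul_exp]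
  ring

lemma integrableOn_Ioi_truncWeight {u : ℝ} (hu : 0 ≤ u) : IntegrableOn truncWeight (Ioi u) :=
  integrableOn_Ioi_deriv_of_nonneg' (fun x _ ↦ hasDerivAt_neg_one_add_mul_exp x)
    (fun _ hx ↦ truncWeight_nonneg (hu.trans hx.le)) tendsto_neg_one_add_mul_exp

lemma integrableOn_Ioi_truncWeight_mul_self :
    IntegrableOn (fun a ↦ truncWeight a * a) (Ioi 0) :=
  integrableOn_Ioi_deriv_of_nonneg' (fun x _ ↦ hasDerivAt_neg_one_add_add_sq_mul_exp x)
    (fun _ hx ↦ mul_nonneg (truncWeight_nonneg hx.le) hx.le) tendsto_neg_one_add_add_sq_mul_exp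

lemma integral_Ioi_truncWeight_mul_min {u : ℝ} (hu : 0 ≤ u) :
    ∫ a in Ioi 0, truncWeight a * min u a = 1 - exp (-u - u ^ 2 / 2) := by
  have hlow : ∫ a in Ioc 0 u, truncWeight a * min u a =
      1 - (1 + u + u ^ 2) * exp (-u - u ^ 2 / 2) := by
    rw [setIntegral_congr_fun measurableSet_Ioc fun a ha ↦ by rw [min_eq_right ha.2],
      ← intervalIntegral.integral_of_le hu, intervalIntegral.integral_eq_sub_of_hasDerivAt
        (fun x _ ↦ hasDerivAt_neg_one_add_add_sq_mul_exp x)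
        ((continuous_truncWeight.mul continuous_id).intervalIntegrable 0 u)]
    norm_num [neg_add_eq_sub]
  have hhigh : ∫ a in Ioi u, truncWeight a * min u a = (1 + u) * exp (-u - u ^ 2 / 2) * u := by
    rw [setIntegral_congr_fun measurableSet_Ioi fun a (ha : u < a) ↦ by rw [min_eq_left ha.le],
      integral_mul_const, integral_Ioi_truncWeight hu]
  have hcont : Continuous fun a ↦ truncWeight a * min u a :=
    continuous_truncWeight.mul (continuous_const.min continuous_id)
  rw [← Ioc_union_Ioi_eq_Ioi hu, setIntegral_union (Ioc_disjoint_Ioi le_rfl) measurableSet_Ioi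
    hcont.integrableOn_Ioc (IntegrableOn.congr_fun ((integrableOn_Ioi_truncWeight hu).mul_const u)
      (fun a (ha : u < a) ↦ by rw [min_eq_left ha.le]) measurableSet_Ioi), hlow, hhigh]
  ring

noncomputable def expMajorant (x : ℝ) : ℝ := Real.sign x * (1 - exp (-|x| - x ^ 2 / 2))

lemma exp_sub_sq_half_le_one_add_expMajorant (x : ℝ) :
    exp (x - x ^ 2 / 2) ≤ 1 + expMajorant x := by
  rcases lt_trichotomy x 0 with hx | rfl | hx
  · rw [expMajorant, Real.sign_of_neg hx, abs_of_neg hx, neg_neg]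
    linarith
  · simp [expMajorant]
  · rw [expMajorant, Real.sign_of_pos hx, abs_of_pos hx]
    have hcosh : exp x + exp (-x) ≤ 2 * exp (x ^ 2 / 2) := by
      linarith [cosh_le_exp_half_sq x, cosh_eq x]
    have hsplit : exp (x - x ^ 2 / 2) + exp (-x - x ^ 2 / 2) =
        (exp x + exp (-x)) * exp (-(x ^ 2 / 2)) := by
      rw [add_mul, ← exp_add, ← exp_add]
      ring_nf
    have hexp : exp (x ^ 2 / 2) * exp (-(x ^ 2 / 2)) = 1 := by
      rw [← exp_add, add_neg_cancel, exp_zero]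
    nlinarith [exp_pos (-(x ^ 2 / 2))]

lemma integral_Ioi_truncWeight_mul_truncAt (x : ℝ) :
    ∫ a in Ioi 0, truncWeight a * truncAt a x = expMajorant x := by
  simp_rw [truncAt, ← mul_assoc, integral_mul_const,
    integral_Ioi_truncWeight_mul_min (abs_nonneg x), sq_abs, expMajorant, mul_comm]

section Mixture

variable {Ω : Type*} [MeasurableSpace Ω] {μ : Measure Ω} {Y : Ω → ℝ}

lemma integrable_truncWeight_mul_truncAt_prod [IsFiniteMeasure μ] (hY : AEMeasurable Y μ) :
    Integrable (fun p : Ω × ℝ ↦ truncWeight p.2 * truncAt p.2 (Y p.1))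
      (μ.prod (volume.restrict (Ioi 0))) := by
  have hdom : Integrable (fun p : Ω × ℝ ↦ truncWeight p.2 * p.2)
      (μ.prod (volume.restrict (Ioi 0))) :=
    integrableOn_Ioi_truncWeight_mul_self.comp_snd μ
  refine hdom.mono' ?_ ?_
  · exact (continuous_truncWeight.measurable.comp measurable_snd).aestronglyMeasurable.mul
      (measurable_truncAt.comp_aemeasurable (measurable_snd.aemeasurable.prodMk
        hY.comp_fst)).aestronglyMeasurable
  · filter_upwards [Measure.quasiMeasurePreserving_snd.ae (ae_restrict_mem measurableSet_Ioi)]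
      with p (hp : 0 < p.2)
    rw [norm_mul, Real.norm_of_nonneg (truncWeight_nonneg hp.le), Real.norm_eq_abs]
    exact mul_le_mul_of_nonneg_left (abs_truncAt_le hp.le _) (truncWeight_nonneg hp.le)

lemma integrable_expMajorant_comp [IsFiniteMeasure μ] (hY : AEMeasurable Y μ) :
    Integrable (fun ω ↦ expMajorant (Y ω)) μ := by
  simpa only [integral_Ioi_truncWeight_mul_truncAt] using
    (integrable_truncWeight_mul_truncAt_prod hY).integral_prod_left

lemma integral_expMajorant_comp_nonpos [IsFiniteMeasure μ] (hY : AEMeasurable Y μ)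
    (hT : ∀ a, 0 < a → ∫ ω, truncAt a (Y ω) ∂μ ≤ 0) :
    ∫ ω, expMajorant (Y ω) ∂μ ≤ 0 := by
  calc ∫ ω, expMajorant (Y ω) ∂μ
      = ∫ a in Ioi 0, ∫ ω, truncWeight a * truncAt a (Y ω) ∂μ := by
        simp_rw [← integral_Ioi_truncWeight_mul_truncAt]
        exact integral_integral_swap (integrable_truncWeight_mul_truncAt_prod hY)
    _ ≤ 0 := setIntegral_nonpos measurableSet_Ioi fun a (ha : 0 < a) ↦ by
        rw [integral_const_mul]
        exact mul_nonpos_of_nonneg_of_nonpos (truncWeight_nonneg ha.le) (hT a ha)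

lemma integral_exp_sub_sq_half_le_one [IsProbabilityMeasure μ] (hY : AEMeasurable Y μ)
    (hT : ∀ a, 0 < a → ∫ ω, truncAt a (Y ω) ∂μ ≤ 0) :
    ∫ ω, exp (Y ω - Y ω ^ 2 / 2) ∂μ ≤ 1 := by
  have hint := integrable_expMajorant_comp hY
  calc ∫ ω, exp (Y ω - Y ω ^ 2 / 2) ∂μ ≤ ∫ ω, (1 + expMajorant (Y ω)) ∂μ :=
        integral_mono_of_nonneg (ae_of_all _ fun _ ↦ (exp_pos _).le)
          ((integrable_const 1).add hint)
          (ae_of_all _ fun ω ↦ exp_sub_sq_half_le_one_add_expMajorant (Y ω))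
    _ = 1 + ∫ ω, expMajorant (Y ω) ∂μ := by
        rw [integral_add (integrable_const 1) hint, integral_const, probReal_univ, one_smul]
    _ ≤ 1 := by linarith [integral_expMajorant_comp_nonpos hY hT]

end Mixture

/-- Lemma 3.1 (1): if `X` is integrable and heavy on left, then for all `t ≥ 0`,
`E[exp(t X − (t²/2) X²)] ≤ 1`. -/
theorem heavyOnLeft_expectation_exp_le_one
    {Ω : Type*} {m0 : MeasurableSpace Ω} {μ : Measure Ω} [IsProbabilityMeasure μ]
    {X : Ω → ℝ} (hXint : Integrable X μ) (hX : IsHeavyOnLeft μ X)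
    {t : ℝ} (ht : 0 ≤ t) :
    ∫ ω, Real.exp (t * X ω - t ^ 2 / 2 * (X ω) ^ 2) ∂μ ≤ 1 := by
  rcases ht.eq_or_lt with rfl | ht
  · simp
  have hmain := integral_exp_sub_sq_half_le_one (hXint.aemeasurable.const_mul t)
    fun a ha ↦ hX.integral_truncAt_const_mul_nonpos ht ha
  convert hmain using 4 with ω
  ring
end

section
/- Let X be a real random variable whose distribution is symmetric (X and −X have the same law). Then for all real t, E[exp(tX − (t²/2)X²)] ≤ 1. -/
open MeasureTheory ProbabilityTheory Real

private lemma key_bound (t x : ℝ) :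
    Real.exp (t * x - t ^ 2 / 2 * x ^ 2) + Real.exp (t * -x - t ^ 2 / 2 * (-x) ^ 2) ≤ 2 := by
  have h : Real.exp (t * x - t ^ 2 / 2 * x ^ 2) + Real.exp (t * -x - t ^ 2 / 2 * (-x) ^ 2)
      = 2 * Real.exp (-(t ^ 2 / 2 * x ^ 2)) * Real.cosh (t * x) := by
    rw [Real.cosh_eq]
    rw [show t * x - t ^ 2 / 2 * x ^ 2 = t * x + -(t ^ 2 / 2 * x ^ 2) by ring,
      show t * -x - t ^ 2 / 2 * (-x) ^ 2 = -(t * x) + -(t ^ 2 / 2 * x ^ 2) by ring,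
      Real.exp_add, Real.exp_add]
    ring
  rw [h]
  have := Real.cosh_le_exp_half_sq (t * x)
  calc 2 * Real.exp (-(t ^ 2 / 2 * x ^ 2)) * Real.cosh (t * x)
      ≤ 2 * Real.exp (-(t ^ 2 / 2 * x ^ 2)) * Real.exp ((t * x) ^ 2 / 2) := by
        have h2 : (0:ℝ) ≤ 2 * Real.exp (-(t ^ 2 / 2 * x ^ 2)) := by positivity
        exact mul_le_mul_of_nonneg_left this h2
    _ = 2 := by
        rw [mul_assoc, ← Real.exp_add,
          show -(t ^ 2 / 2 * x ^ 2) + (t * x) ^ 2 / 2 = 0 by ring, Real.exp_zero, mul_one]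

/-- Lemma 3.1 (3): if `X` has a symmetric distribution (i.e. `X` and `−X` are identically
distributed), then for all real `t`, `E[exp(t X − (t²/2) X²)] ≤ 1`. -/
theorem symmetric_expectation_exp_le_one
    {Ω : Type*} {m0 : MeasurableSpace Ω} {μ : Measure Ω} [IsProbabilityMeasure μ]
    {X : Ω → ℝ} (hX : IdentDistrib X (fun ω => -X ω) μ μ) (t : ℝ) :
    ∫ ω, Real.exp (t * X ω - t ^ 2 / 2 * (X ω) ^ 2) ∂μ ≤ 1 := by
  set g : ℝ → ℝ := fun x => Real.exp (t * x - t ^ 2 / 2 * x ^ 2) with hg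
  have hgm : Measurable g := by fun_prop
  have hident : IdentDistrib (g ∘ X) (g ∘ fun ω => -X ω) μ μ :=
    hX.comp hgm
  have hbound : ∀ x : ℝ, g x ≤ Real.exp (1/2) := by
    intro x
    apply Real.exp_le_exp.2
    nlinarith [sq_nonneg (t * x - 1)]
  have hpos : ∀ x : ℝ, 0 < g x := fun x => Real.exp_pos _
  have hint1 : Integrable (g ∘ X) μ := by
    apply Integrable.mono' (integrable_const (Real.exp (1/2)))
    · exact (hgm.comp hX.aemeasurable_fst.measurable_mk).aestronglyMeasurable.congr
        (Filter.EventuallyEq.fun_comp hX.aemeasurable_fst.ae_eq_mk.symm g)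
    · filter_upwards with ω
      simp only [Function.comp_apply, Real.norm_eq_abs, abs_of_pos (hpos _)]
      exact hbound _
  have hint2 : Integrable (g ∘ fun ω => -X ω) μ := by
    apply Integrable.mono' (integrable_const (Real.exp (1/2)))
    · exact (hgm.comp hX.aemeasurable_snd.measurable_mk).aestronglyMeasurable.congr
        (Filter.EventuallyEq.fun_comp hX.aemeasurable_snd.ae_eq_mk.symm g)
    · filter_upwards with ω
      simp only [Function.comp_apply, Real.norm_eq_abs, abs_of_pos (hpos _)]
      exact hbound _
  have heq : ∫ ω, (g ∘ X) ω ∂μ = ∫ ω, (g ∘ fun ω => -X ω) ω ∂μ := hident.integral_eq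
  have hsum : ∫ ω, ((g ∘ X) ω + (g ∘ fun ω => -X ω) ω) ∂μ ≤ 2 := by
    calc ∫ ω, ((g ∘ X) ω + (g ∘ fun ω => -X ω) ω) ∂μ
        ≤ ∫ _ω, (2:ℝ) ∂μ := by
          apply integral_mono (hint1.add hint2) (integrable_const 2)
          intro ω; exact key_bound t (X ω)
      _ = 2 := by simp
  rw [integral_add hint1 hint2, ← heq] at hsum
  have : ∫ ω, (g ∘ X) ω ∂μ ≤ 1 := by linarith
  exact this
end

section
/- Let X be an integrable real random variable with cumulative distribution function F, and for a > 0 let H(a) = ∫_0^a ( F(−x) − (1 − F(x⁻)) ) dx, where F(x⁻) denotes the left limit of F at x. Then for every a > 0, E[T_a(X)] = −H(a), where T_a(X) = min(|X|, a)·sign(X). -/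
open MeasureTheory ProbabilityTheory Real

/-! Since `T_a(x) = min(x⁺, a) - min(x⁻, a)`, the layer-cake formula gives
`E[T_a(X)] = ∫₀^a P(X ≥ t) dt - ∫₀^a P(X ≤ -t) dt`, and the two integrands are `1 - F(t⁻)` and
`F(-t)`. Both sides depend only on the law of `X`, whose distribution function is `F`. -/

open Set

lemma truncAt_eq_sub {a : ℝ} (ha : 0 ≤ a) :
    truncAt a = fun x => min (max x 0) a - min (max (-x) 0) a := by
  funext x
  rcases lt_trichotomy x 0 with hx | rfl | hx
  · simp [truncAt, Real.sign_of_neg hx, abs_of_neg hx, hx.le, min_eq_left ha]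
  · simp [truncAt]
  · simp [truncAt, Real.sign_of_pos hx, abs_of_pos hx, hx.le, min_eq_left ha]

lemma continuous_truncAt {a : ℝ} (ha : 0 ≤ a) : Continuous (truncAt a) := by
  rw [truncAt_eq_sub ha]
  fun_prop

section LayerCake

variable {α : Type*} [MeasurableSpace α] {μ : Measure α} {f : α → ℝ} {a : ℝ}

lemma integrable_min_max_zero [IsFiniteMeasure μ] (hf : AEMeasurable f μ) (ha : 0 ≤ a) :
    Integrable (fun ω => min (max (f ω) 0) a) μ :=
  .of_bound ((hf.max aemeasurable_const).min aemeasurable_const).aestronglyMeasurable a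
    (.of_forall fun ω => by
      rw [norm_of_nonneg (le_min (le_max_right _ _) ha)]
      exact min_le_right _ _)

lemma integral_min_max_zero_eq_integral_Ioc_measureReal_le [IsFiniteMeasure μ]
    (hf : AEMeasurable f μ) (ha : 0 ≤ a) :
    ∫ ω, min (max (f ω) 0) a ∂μ = ∫ t in Ioc 0 a, μ.real {ω | t ≤ f ω} := by
  rw [(integrable_min_max_zero hf ha).integral_eq_integral_Ioc_meas_le
    (.of_forall fun ω => le_min (le_max_right _ _) ha) (.of_forall fun ω => min_le_right _ _)]
  refine setIntegral_congr_fun measurableSet_Ioc fun t ⟨ht0, hta⟩ => ?_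
  have hset : {ω | t ≤ min (max (f ω) 0) a} = {ω | t ≤ f ω} := by
    ext ω
    simp only [mem_ofPred_eq, le_min_iff, le_max_iff, hta, and_true, or_iff_left_iff_imp]
    exact fun h => absurd h (not_le.2 ht0)
  rw [hset]

end LayerCake

lemma one_sub_leftLim_cdf (ν : Measure ℝ) [IsProbabilityMeasure ν] (x : ℝ) :
    1 - Function.leftLim (cdf ν) x = ν.real (Ici x) := by
  have hle : Function.leftLim (cdf ν) x ≤ 1 :=
    ((monotone_cdf ν).leftLim_le le_rfl).trans (cdf_le_one ν x)
  have hIci := (cdf ν).measure_Ici (tendsto_cdf_atTop ν) x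
  rw [measure_cdf] at hIci
  rw [measureReal_def, hIci, ENNReal.toReal_ofReal (sub_nonneg.2 hle)]

theorem integral_truncAt_eq_neg_integral_cdf (ν : Measure ℝ) [IsProbabilityMeasure ν] {a : ℝ}
    (ha : 0 ≤ a) :
    ∫ x, truncAt a x ∂ν =
      -(∫ x in (0 : ℝ)..a, (cdf ν (-x) - (1 - Function.leftLim (cdf ν) x))) := by
  have hid : AEMeasurable (fun x : ℝ => x) ν := measurable_id.aemeasurable
  have hneg : AEMeasurable (fun x : ℝ => -x) ν := measurable_neg.aemeasurable
  have hleft : IntervalIntegrable (fun x => cdf ν (-x)) volume 0 a :=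
    ((monotone_cdf ν).comp_antitone fun _ _ => neg_le_neg).intervalIntegrable
  have hright : IntervalIntegrable (fun x => 1 - Function.leftLim (cdf ν) x) volume 0 a :=
    intervalIntegrable_const.sub (monotone_cdf ν).leftLim.intervalIntegrable
  have hIic (t : ℝ) : {x : ℝ | t ≤ -x} = Iic (-t) := by ext; simp [le_neg]
  simp only [truncAt_eq_sub ha]
  rw [integral_sub (integrable_min_max_zero hid ha) (integrable_min_max_zero hneg ha),
    integral_min_max_zero_eq_integral_Ioc_measureReal_le hid ha,
    integral_min_max_zero_eq_integral_Ioc_measureReal_le hneg ha,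
    intervalIntegral.integral_sub hleft hright, intervalIntegral.integral_of_le ha,
    intervalIntegral.integral_of_le ha]
  simp only [cdf_eq_real, one_sub_leftLim_cdf, hIic, Ici_def]
  ring

/-- Remark 3.1: if `X` is an integrable real random variable with cumulative distribution
function `F`, then for every `a > 0`, `E[T_a(X)] = −H(a)` where
`H(a) = ∫_0^a (F(−x) − (1 − F(x⁻))) dx` and `F(x⁻)` is the left limit of `F` at `x`. -/
theorem expectation_trunc_eq_neg_H
    {Ω : Type*} {m0 : MeasurableSpace Ω} {μ : Measure Ω} [IsProbabilityMeasure μ]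
    {X : Ω → ℝ} (hXint : Integrable X μ)
    (F : ℝ → ℝ) (hF : ∀ x : ℝ, F x = (μ {ω | X ω ≤ x}).toReal)
    {a : ℝ} (ha : 0 < a) :
    ∫ ω, truncAt a (X ω) ∂μ =
      -(∫ x in (0 : ℝ)..a, (F (-x) - (1 - Function.leftLim F x))) := by
  have hX := hXint.aemeasurable
  have : IsProbabilityMeasure (μ.map X) := Measure.isProbabilityMeasure_map hX
  have hF_cdf : F = cdf (μ.map X) := funext fun x => by
    rw [hF, cdf_eq_real, measureReal_def, Measure.map_apply_of_aemeasurable hX measurableSet_Iic]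
    rfl
  rw [← integral_map hX (continuous_truncAt ha.le).aestronglyMeasurable, hF_cdf]
  exact integral_truncAt_eq_neg_integral_cdf (μ.map X) ha.le
end

section
/- Consider the stochastic linear regression X_{k+1} = θφ_k + ε_{k+1}, where (φ_n)_{n≥0} are i.i.d. real random variables, (ε_n)_{n≥1} are identically distributed real random variables with mean zero and variance σ² > 0, and for each n ≥ 0 the variable ε_{n+1} is independent of F_n = σ(φ_0, ε_1, …, φ_{n−1}, ε_n). Let θ̂_n = (Σ_{k=1}^n φ_{k−1}X_k)/(Σ_{k=1}^n φ_{k−1}²) be the least-squares estimator. Assume the cumulant generating function L(t) = log E[exp(tε_1²)] is finite on an interval [0, c] with c > 0, let I(x) = sup_{0≤t≤c}{ xt − L(t) }, and let H(t) = log E[exp(tφ_0²)]. Then for all n ≥ 1, x > 0, y > 0 and every p > 1, P(|θ̂_n − θ| ≥ x) ≤ 2 exp( (n/p) H( −(p−1)x²/(2σ²(1+y)) ) ) + exp( −n I(σ²y/n) ). -/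
/-!
On the event `|θ̂ₙ - θ| ≥ x`, Cauchy–Schwarz gives `x² Qₙ² ≤ Mₙ² ≤ Qₙ Sₙ`, where
`Qₙ = ∑ φₖ²`, `Mₙ = ∑ φₖ εₖ₊₁` and `Sₙ = ∑ εₖ₊₁²`; hence either `Qₙ ≤ σ²y/x²` or `Sₙ ≥ σ²y` (if `Qₙ = 0`, `θ̂ₙ` is the
junk value `0 / 0 = 0`, but then the first alternative holds).
Both events are bounded by Chernoff's inequality. For the first, at the exponent
`-(p-1)x²/(2pσ²(1+y))` the prefactor is at most `exp (1/2) ≤ 2`, and Jensen's inequality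
`H(t/p) ≤ H(t)/p` produces the factor `n/p`. For the second, the moment generating function of
`Sₙ` factorises because each `εₖ₊₁` is independent of the past, and optimising over `t ∈ [0, c]`
gives the rate function `I`.
-/

open MeasureTheory ProbabilityTheory Real Finset

lemma Finset.sum_Icc_one_eq_sum_range {M : Type*} [AddCommMonoid M] (f : ℕ → M) (n : ℕ) :
    ∑ k ∈ Icc 1 n, f k = ∑ k ∈ range n, f (k + 1) := by
  rw [range_eq_Ico, sum_Ico_add', Finset.Ico_add_one_right_eq_Icc, zero_add]

lemma sum_sq_le_div_or_le_sum_sq_of_le_abs_sub {ι : Type*} (s : Finset ι) (θ : ℝ) (a e : ι → ℝ)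
    {x b : ℝ} (hx : 0 < x) (hb : 0 ≤ b)
    (h : x ≤ |(∑ i ∈ s, a i * (θ * a i + e i)) / (∑ i ∈ s, a i ^ 2) - θ|) :
    ∑ i ∈ s, a i ^ 2 ≤ b / x ^ 2 ∨ b ≤ ∑ i ∈ s, e i ^ 2 := by
  set Q := ∑ i ∈ s, a i ^ 2
  set M := ∑ i ∈ s, a i * e i
  rw [or_iff_not_imp_right, not_le, le_div_iff₀ (by positivity)]
  intro hS
  have hQ0 : 0 ≤ Q := sum_nonneg fun i _ ↦ sq_nonneg (a i)
  rcases hQ0.eq_or_lt with hQ | hQ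
  · rwa [← hQ, zero_mul]
  have hnum : ∑ i ∈ s, a i * (θ * a i + e i) = θ * Q + M := by
    simp only [Q, M, mul_sum, ← sum_add_distrib]
    exact sum_congr rfl fun i _ ↦ by ring
  have herr : (∑ i ∈ s, a i * (θ * a i + e i)) / Q - θ = M / Q := by
    rw [hnum]
    field_simp
    ring
  rw [herr, abs_div, abs_of_pos hQ, le_div_iff₀ hQ] at h
  have hxM : (x * Q) ^ 2 ≤ M ^ 2 := by
    rw [← sq_abs M]
    gcongr
  have hCS : M ^ 2 ≤ Q * ∑ i ∈ s, e i ^ 2 := sum_mul_sq_le_sq_mul_sq s a e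
  nlinarith

lemma le_exp_neg_mul_sSup_image {q r : ℝ} {s : Set ℝ} {g : ℝ → ℝ} (hs : s.Nonempty) (hr : 0 < r)
    (h : ∀ t ∈ s, q ≤ exp (-r * g t)) : q ≤ exp (-r * sSup (g '' s)) := by
  rcases le_or_gt q 0 with hq | hq
  · exact hq.trans (exp_pos _).le
  have hbound : sSup (g '' s) * r ≤ -log q := by
    rw [← le_div_iff₀ hr]
    refine csSup_le (hs.image g) ?_
    rintro _ ⟨t, ht, rfl⟩
    rw [le_div_iff₀ hr]
    linarith [(log_le_log hq (h t ht)).trans_eq (log_exp _)]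
  calc q = exp (log q) := (exp_log hq).symm
    _ ≤ exp (-r * sSup (g '' s)) := exp_le_exp.2 (by linarith)

lemma exp_neg_div_mul_le_two {σ2 x y p : ℝ} (hσ2 : 0 < σ2) (hx : x ≠ 0) (hy : 0 < y)
    (hp : 1 ≤ p) : exp (-(-(p - 1) * x ^ 2 / (2 * σ2 * (1 + y)) / p * (σ2 * y / x ^ 2))) ≤ 2 := by
  have hfactor : (p - 1) / p * (y / (1 + y)) ≤ 1 :=
    mul_le_one₀ (div_le_one_of_le₀ (sub_le_self p zero_le_one) (by linarith))
      (div_nonneg (by linarith) (by linarith))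
      (div_le_one_of_le₀ (le_add_of_nonneg_left zero_le_one) (by positivity))
  have hhalf : -(-(p - 1) * x ^ 2 / (2 * σ2 * (1 + y)) / p * (σ2 * y / x ^ 2)) ≤ log 2 := by
    rw [show -(-(p - 1) * x ^ 2 / (2 * σ2 * (1 + y)) / p * (σ2 * y / x ^ 2))
        = (p - 1) / p * (y / (1 + y)) / 2 by field_simp]
    linarith [log_two_gt_d9]
  exact (exp_le_exp.2 hhalf).trans_eq (exp_log two_pos)

namespace ProbabilityTheory

variable {Ω : Type*} {m0 : MeasurableSpace Ω} {μ : Measure Ω} {X : Ω → ℝ} {t : ℝ}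

lemma Indep.indepFun {β γ : Type*} [MeasurableSpace β] [MeasurableSpace γ]
    {m₁ m₂ : MeasurableSpace Ω} (h : Indep m₁ m₂ μ) {f : Ω → β} {g : Ω → γ}
    (hf : Measurable[m₁] f) (hg : Measurable[m₂] g) : IndepFun f g μ :=
  (IndepFun_iff_Indep f g μ).2
    (indep_of_indep_of_le_right (indep_of_indep_of_le_left h hf.comap_le) hg.comap_le)

lemma integrable_exp_mul_of_nonpos_of_nonneg [IsFiniteMeasure μ] (hX : AEMeasurable X μ)
    (hX0 : ∀ᵐ ω ∂μ, 0 ≤ X ω) (ht : t ≤ 0) : Integrable (fun ω ↦ exp (t * X ω)) μ := by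
  refine (integrable_const 1).mono' (by fun_prop) ?_
  filter_upwards [hX0] with ω hω
  simpa using mul_nonpos_of_nonpos_of_nonneg ht hω

lemma cgf_div_le_div [IsProbabilityMeasure μ] {p : ℝ} (hp : 1 ≤ p)
    (h : Integrable (fun ω ↦ exp (t * X ω)) μ) : cgf X μ (t / p) ≤ cgf X μ t / p := by
  have hp0 : 0 ≤ p⁻¹ := inv_nonneg.2 (by linarith)
  have hdiv : Integrable (fun ω ↦ exp (t / p * X ω)) μ := by
    have h0 : (0 : ℝ) ∈ integrableExpSet X μ := by simp [integrableExpSet]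
    simpa [integrableExpSet, div_eq_inv_mul] using
      convex_integrableExpSet h h0 hp0 (sub_nonneg.2 (inv_le_one_of_one_le₀ hp)) (by ring)
  have hrpow : ∀ ω, exp (t / p * X ω) = exp (t * X ω) ^ p⁻¹ := fun ω ↦ by
    rw [← exp_mul]
    ring_nf
  have hjensen : mgf X μ (t / p) ≤ mgf X μ t ^ p⁻¹ := by
    simp only [mgf, hrpow]
    refine (Real.concaveOn_rpow hp0 (inv_le_one_of_one_le₀ hp)).le_map_integral
      (continuousOn_id.rpow_const fun _ _ ↦ Or.inr hp0) isClosed_Ici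
      (ae_of_all _ fun ω ↦ (exp_pos _).le) h ?_
    simpa [Function.comp_def, hrpow] using hdiv
  calc cgf X μ (t / p) ≤ log (mgf X μ t ^ p⁻¹) := log_le_log (mgf_pos hdiv) hjensen
    _ = cgf X μ t / p := by rw [log_rpow (mgf_pos h), cgf, inv_mul_eq_div]

lemma mgf_sum_range_of_indepFun [IsProbabilityMeasure μ] {Y : ℕ → Ω → ℝ}
    (hmeas : ∀ k, Measurable (Y k)) (hindep : ∀ m, IndepFun (∑ k ∈ range m, Y k) (Y m) μ)
    (hident : ∀ k, IdentDistrib (Y k) (Y 0) μ μ) (t : ℝ) (n : ℕ) :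
    mgf (∑ k ∈ range n, Y k) μ t = mgf (Y 0) μ t ^ n := by
  induction n with
  | zero => simp
  | succ m ih =>
    rw [sum_range_succ, (hindep m).mgf_add' (by fun_prop) (hmeas m).aestronglyMeasurable,
      ih, mgf_congr_of_identDistrib _ _ (hident m), pow_succ]

lemma integrable_exp_mul_sum_range_of_indepFun [IsProbabilityMeasure μ] {Y : ℕ → Ω → ℝ}
    (hmeas : ∀ k, Measurable (Y k)) (hindep : ∀ m, IndepFun (∑ k ∈ range m, Y k) (Y m) μ)
    (hident : ∀ k, IdentDistrib (Y k) (Y 0) μ μ) (h : Integrable (fun ω ↦ exp (t * Y 0 ω)) μ)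
    (n : ℕ) : Integrable (fun ω ↦ exp (t * (∑ k ∈ range n, Y k) ω)) μ :=
  mgf_pos_iff.1 (mgf_sum_range_of_indepFun hmeas hindep hident t n ▸ pow_pos (mgf_pos h) n)

lemma mgf_sum_range_of_indepFun_eq_exp_cgf [IsProbabilityMeasure μ] {Y : ℕ → Ω → ℝ}
    (hmeas : ∀ k, Measurable (Y k)) (hindep : ∀ m, IndepFun (∑ k ∈ range m, Y k) (Y m) μ)
    (hident : ∀ k, IdentDistrib (Y k) (Y 0) μ μ) (h : Integrable (fun ω ↦ exp (t * Y 0 ω)) μ)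
    (n : ℕ) : mgf (∑ k ∈ range n, Y k) μ t = exp (n * cgf (Y 0) μ t) := by
  rw [mgf_sum_range_of_indepFun hmeas hindep hident, ← exp_cgf h, ← exp_nat_mul]

lemma measureReal_le_sum_range_le_exp [IsProbabilityMeasure μ] {Y : ℕ → Ω → ℝ}
    (hmeas : ∀ k, Measurable (Y k)) (hindep : ∀ m, IndepFun (∑ k ∈ range m, Y k) (Y m) μ)
    (hident : ∀ k, IdentDistrib (Y k) (Y 0) μ μ) (ht : 0 ≤ t)
    (h : Integrable (fun ω ↦ exp (t * Y 0 ω)) μ) (b : ℝ) (n : ℕ) :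
    μ.real {ω | b ≤ ∑ k ∈ range n, Y k ω} ≤ exp (-t * b + n * cgf (Y 0) μ t) := by
  simpa only [mgf_sum_range_of_indepFun_eq_exp_cgf hmeas hindep hident h, ← exp_add,
    Finset.sum_apply] using
    measure_ge_le_exp_mul_mgf b ht
      (integrable_exp_mul_sum_range_of_indepFun hmeas hindep hident h n)

lemma measureReal_sum_range_le_le_exp [IsProbabilityMeasure μ] {Y : ℕ → Ω → ℝ}
    (hmeas : ∀ k, Measurable (Y k)) (hindep : ∀ m, IndepFun (∑ k ∈ range m, Y k) (Y m) μ)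
    (hident : ∀ k, IdentDistrib (Y k) (Y 0) μ μ) (hY : ∀ ω, 0 ≤ Y 0 ω) (ht : t ≤ 0)
    (a : ℝ) (n : ℕ) :
    μ.real {ω | ∑ k ∈ range n, Y k ω ≤ a} ≤ exp (-t * a + n * cgf (Y 0) μ t) := by
  have h :=
    integrable_exp_mul_of_nonpos_of_nonneg (μ := μ) (hmeas 0).aemeasurable (ae_of_all _ hY) ht
  simpa only [mgf_sum_range_of_indepFun_eq_exp_cgf hmeas hindep hident h, ← exp_add,
    Finset.sum_apply] using
    measure_le_le_exp_mul_mgf a ht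
      (integrable_exp_mul_sum_range_of_indepFun hmeas hindep hident h n)

lemma measureReal_sum_range_le_le_exp_div [IsProbabilityMeasure μ] {Y : ℕ → Ω → ℝ}
    (hmeas : ∀ k, Measurable (Y k)) (hindep : ∀ m, IndepFun (∑ k ∈ range m, Y k) (Y m) μ)
    (hident : ∀ k, IdentDistrib (Y k) (Y 0) μ μ) (hY : ∀ ω, 0 ≤ Y 0 ω) (ht : t ≤ 0)
    {p : ℝ} (hp : 1 ≤ p) (a : ℝ) (n : ℕ) :
    μ.real {ω | ∑ k ∈ range n, Y k ω ≤ a} ≤ exp (-(t / p * a) + n / p * cgf (Y 0) μ t) := by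
  have hjensen := cgf_div_le_div hp
    (integrable_exp_mul_of_nonpos_of_nonneg (μ := μ) (hmeas 0).aemeasurable (ae_of_all _ hY) ht)
  refine (measureReal_sum_range_le_le_exp hmeas hindep hident hY
    (div_nonpos_of_nonpos_of_nonneg ht (zero_le_one.trans hp)) a n).trans (exp_le_exp.2 ?_)
  have := mul_le_mul_of_nonneg_left hjensen (Nat.cast_nonneg (α := ℝ) n)
  rw [mul_div_assoc', ← div_mul_eq_mul_div] at this
  linarith

lemma measureReal_le_sum_range_le_exp_neg_mul_sSup [IsProbabilityMeasure μ] {Y : ℕ → Ω → ℝ}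
    (hmeas : ∀ k, Measurable (Y k)) (hindep : ∀ m, IndepFun (∑ k ∈ range m, Y k) (Y m) μ)
    (hident : ∀ k, IdentDistrib (Y k) (Y 0) μ μ) {c : ℝ} (hc : 0 ≤ c)
    (hint : ∀ s ∈ Set.Icc 0 c, Integrable (fun ω ↦ exp (s * Y 0 ω)) μ) (b : ℝ) {n : ℕ}
    (hn : 0 < n) :
    μ.real {ω | b ≤ ∑ k ∈ range n, Y k ω}
      ≤ exp (-n * sSup ((fun s ↦ b / n * s - cgf (Y 0) μ s) '' Set.Icc 0 c)) := by
  refine le_exp_neg_mul_sSup_image ⟨0, le_rfl, hc⟩ (by exact_mod_cast hn) fun s hs ↦ ?_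
  refine (measureReal_le_sum_range_le_exp hmeas hindep hident hs.1 (hint s hs) b n).trans_eq ?_
  congr 1
  field_simp
  ring

lemma indepFun_sum_range_sq_of_indep {φ ε : ℕ → Ω → ℝ} {m : ℕ}
    (h : Indep (MeasurableSpace.comap (ε (m + 1)) inferInstance)
      (⨆ k ∈ range m, (MeasurableSpace.comap (φ k) inferInstance ⊔
        MeasurableSpace.comap (ε (k + 1)) inferInstance)) μ) :
    IndepFun (∑ k ∈ range m, fun ω ↦ ε (k + 1) ω ^ 2) (fun ω ↦ ε (m + 1) ω ^ 2) μ := by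
  refine h.symm.indepFun ?_ ((comap_measurable _).pow_const 2)
  rw [sum_fn]
  exact Finset.measurable_sum _ fun k hk ↦
    (Measurable.of_comap_le (le_iSup₂_of_le k hk le_sup_right)).pow_const 2

end ProbabilityTheory

theorem linear_regression_least_squares_exponential_inequality_general
    {Ω : Type*} {m0 : MeasurableSpace Ω} {μ : Measure Ω} [IsProbabilityMeasure μ]
    (θ : ℝ) (φ ε X : ℕ → Ω → ℝ)
    (hφmeas : ∀ k, Measurable (φ k)) (hεmeas : ∀ k, Measurable (ε k))
    -- the regression variables (φ_n) are i.i.d.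
    (hφindep : iIndepFun φ μ)
    (hφident : ∀ k, IdentDistrib (φ k) (φ 0) μ μ)
    -- the noise (ε_n)_{n ≥ 1} is identically distributed with mean zero and variance σ² > 0
    (hεident : ∀ k, 1 ≤ k → IdentDistrib (ε k) (ε 1) μ μ)
    {σ2 : ℝ} (hσ2 : 0 < σ2)
    -- ε_{n+1} is independent of F_n = σ(φ_0, ε_1, …, φ_{n−1}, ε_n)
    (hindep : ∀ n : ℕ, Indep (MeasurableSpace.comap (ε (n + 1)) inferInstance)
      (⨆ k ∈ Finset.range n, (MeasurableSpace.comap (φ k) inferInstance ⊔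
        MeasurableSpace.comap (ε (k + 1)) inferInstance)) μ)
    -- the regression model
    (hX : ∀ k : ℕ, ∀ ω, X (k + 1) ω = θ * φ k ω + ε (k + 1) ω)
    -- the cumulant generating function `L` of `ε₁²` is finite on `[0, c]`, `c > 0`
    {c : ℝ} (hc : 0 < c)
    (hLfin : ∀ t ∈ Set.Icc (0 : ℝ) c, Integrable (fun ω => Real.exp (t * (ε 1 ω) ^ 2)) μ)
    (L : ℝ → ℝ) (hLdef : ∀ t, L t = Real.log (∫ ω, Real.exp (t * (ε 1 ω) ^ 2) ∂μ))
    -- `I` is the Fenchel–Legendre transform of `L` on `[0, c]`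
    (I : ℝ → ℝ) (hIdef : ∀ z, I z = sSup ((fun t => z * t - L t) '' Set.Icc (0 : ℝ) c))
    -- `H` is the cumulant generating function of `φ₀²`
    (H : ℝ → ℝ) (hHdef : ∀ t, H t = Real.log (∫ ω, Real.exp (t * (φ 0 ω) ^ 2) ∂μ))
    (n : ℕ) (hn : 1 ≤ n) {x y p : ℝ} (hx : 0 < x) (hy : 0 < y) (hp : 1 < p) :
    μ {ω | x ≤ |(∑ k ∈ Finset.Icc 1 n, φ (k - 1) ω * X k ω) /
          (∑ k ∈ Finset.Icc 1 n, (φ (k - 1) ω) ^ 2) - θ|}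
      ≤ ENNReal.ofReal
          (2 * Real.exp ((n / p) * H (-(p - 1) * x ^ 2 / (2 * σ2 * (1 + y))))
            + Real.exp (-(n : ℝ) * I (σ2 * y / n))) := by
  obtain rfl : H = cgf (fun ω ↦ φ 0 ω ^ 2) μ := funext hHdef
  obtain rfl : L = cgf (fun ω ↦ ε 1 ω ^ 2) μ := funext hLdef
  obtain rfl : I = fun z ↦ sSup ((fun t ↦ z * t - cgf (fun ω ↦ ε 1 ω ^ 2) μ t) '' Set.Icc 0 c) :=
    funext hIdef
  have hsub : {ω | x ≤ |(∑ k ∈ Icc 1 n, φ (k - 1) ω * X k ω) /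
      (∑ k ∈ Icc 1 n, (φ (k - 1) ω) ^ 2) - θ|} ⊆ {ω | ∑ k ∈ range n, φ k ω ^ 2 ≤ σ2 * y / x ^ 2}
        ∪ {ω | σ2 * y ≤ ∑ k ∈ range n, ε (k + 1) ω ^ 2} := fun ω hω ↦ by
    simp only [Set.mem_ofPred_eq, sum_Icc_one_eq_sum_range, Nat.add_sub_cancel, hX] at hω
    exact sum_sq_le_div_or_le_sum_sq_of_le_abs_sub _ θ _ _ hx (by positivity) hω
  have hφmeas2 k : Measurable fun ω ↦ φ k ω ^ 2 := (hφmeas k).pow_const 2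
  have hA := measureReal_sum_range_le_le_exp_div hφmeas2
    (fun m ↦ (hφindep.comp (fun _ u ↦ u ^ 2) fun _ ↦ measurable_id.pow_const 2)
      |>.indepFun_finsetSum_of_notMem hφmeas2 notMem_range_self)
    (fun k ↦ (hφident k).comp (measurable_id.pow_const 2)) (fun ω ↦ sq_nonneg _)
    (t := -(p - 1) * x ^ 2 / (2 * σ2 * (1 + y)))
    (div_nonpos_of_nonpos_of_nonneg (by nlinarith) (by positivity))
    hp.le (σ2 * y / x ^ 2) n
  have hB := measureReal_le_sum_range_le_exp_neg_mul_sSup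
    (fun k ↦ (hεmeas (k + 1)).pow_const 2) (fun m ↦ indepFun_sum_range_sq_of_indep (hindep m))
    (fun k ↦ (hεident (k + 1) (Nat.le_add_left 1 k)).comp (measurable_id.pow_const 2))
    hc.le hLfin (σ2 * y) hn
  refine (measure_mono hsub).trans ((measure_union_le _ _).trans ?_)
  rw [ENNReal.ofReal_add (by positivity) (by positivity), ← ofReal_measureReal,
    ← ofReal_measureReal]
  gcongr
  refine hA.trans ?_
  rw [exp_add]
  gcongr
  exact exp_neg_div_mul_le_two hσ2 hx.ne' hy hp.le

/-- Corollary 5.1: exponential inequality for the least-squares estimator in the stochastic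
linear regression `X_{k+1} = θ φ_k + ε_{k+1}`. For all `n ≥ 1`, `x, y > 0` and every `p > 1`,
`P(|θ̂_n − θ| ≥ x) ≤ 2 exp((n/p) H(−(p−1)x²/(2σ²(1+y)))) + exp(−n I(σ²y/n))`. -/
theorem linear_regression_least_squares_exponential_inequality
    {Ω : Type*} {m0 : MeasurableSpace Ω} {μ : Measure Ω} [IsProbabilityMeasure μ]
    (θ : ℝ) (φ ε X : ℕ → Ω → ℝ)
    (hφmeas : ∀ k, Measurable (φ k)) (hεmeas : ∀ k, Measurable (ε k))
    -- the regression variables (φ_n) are i.i.d.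
    (hφindep : iIndepFun φ μ)
    (hφident : ∀ k, IdentDistrib (φ k) (φ 0) μ μ)
    -- the noise (ε_n)_{n ≥ 1} is identically distributed with mean zero and variance σ² > 0
    (hεident : ∀ k, 1 ≤ k → IdentDistrib (ε k) (ε 1) μ μ)
    {σ2 : ℝ} (hσ2 : 0 < σ2) (hεsq : MemLp (ε 1) 2 μ)
    (hεmean : ∫ ω, ε 1 ω ∂μ = 0) (hεvar : ∫ ω, (ε 1 ω) ^ 2 ∂μ = σ2)
    -- ε_{n+1} is independent of F_n = σ(φ_0, ε_1, …, φ_{n−1}, ε_n)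
    (hindep : ∀ n : ℕ, Indep (MeasurableSpace.comap (ε (n + 1)) inferInstance)
      (⨆ k ∈ Finset.range n, (MeasurableSpace.comap (φ k) inferInstance ⊔
        MeasurableSpace.comap (ε (k + 1)) inferInstance)) μ)
    -- the regression model
    (hX : ∀ k : ℕ, ∀ ω, X (k + 1) ω = θ * φ k ω + ε (k + 1) ω)
    -- the cumulant generating function `L` of `ε₁²` is finite on `[0, c]`, `c > 0`
    {c : ℝ} (hc : 0 < c)
    (hLfin : ∀ t ∈ Set.Icc (0 : ℝ) c, Integrable (fun ω => Real.exp (t * (ε 1 ω) ^ 2)) μ)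
    (L : ℝ → ℝ) (hLdef : ∀ t, L t = Real.log (∫ ω, Real.exp (t * (ε 1 ω) ^ 2) ∂μ))
    -- `I` is the Fenchel–Legendre transform of `L` on `[0, c]`
    (I : ℝ → ℝ) (hIdef : ∀ z, I z = sSup ((fun t => z * t - L t) '' Set.Icc (0 : ℝ) c))
    -- `H` is the cumulant generating function of `φ₀²`
    (H : ℝ → ℝ) (hHdef : ∀ t, H t = Real.log (∫ ω, Real.exp (t * (φ 0 ω) ^ 2) ∂μ))
    (n : ℕ) (hn : 1 ≤ n) {x y p : ℝ} (hx : 0 < x) (hy : 0 < y) (hp : 1 < p) :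
    μ {ω | x ≤ |(∑ k ∈ Finset.Icc 1 n, φ (k - 1) ω * X k ω) /
          (∑ k ∈ Finset.Icc 1 n, (φ (k - 1) ω) ^ 2) - θ|}
      ≤ ENNReal.ofReal
          (2 * Real.exp ((n / p) * H (-(p - 1) * x ^ 2 / (2 * σ2 * (1 + y))))
            + Real.exp (-(n : ℝ) * I (σ2 * y / n))) :=
  linear_regression_least_squares_exponential_inequality_general (m0 := m0) θ φ ε X hφmeas hεmeas
    hφindep hφident hεident hσ2 hindep hX hc hLfin L hLdef I hIdef H hHdef n hn hx hy hp
end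

section
/- Consider the Gaussian autoregressive process X_{k+1} = θX_k + ε_{k+1}, where (ε_n) are i.i.d. N(0, σ²) with σ² > 0 and X_0 is independent of (ε_n) with N(0, τ²) distribution, τ² ≥ σ². Let θ̃_n = (Σ_{k=1}^n X_{k−1}X_k)/(Σ_{k=0}^n X_k²) be the Yule–Walker estimator, let h(y) = (1+y)log(1+y) − y, and for x > 0 let y_x be the unique positive solution of h(y_x) = x². Then for all n ≥ 1 and x > 0, P(|θ̃_n − θ| ≥ x + |θ|) ≤ 2 exp( −n x² / (2(1 + y_x)) ). -/
/-!
Write `S = ∑_{k ≤ n} X_k²` and `M = ∑_{k < n} X_k ε_{k+1}`. The recursion gives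
`θ̃_n - θ = (M - θ X_n²) / S`, so on the deviation event `x S ≤ ±M`. For each sign, Chernoff's
bound and Hölder's inequality with exponents `p = (y + x²)/y`, `q = (y + x²)/x²` split
`E exp (t (±M - x S))` into two factors. The first is the exponential martingale
`E exp (c M - c² σ²/2 ∑_{k<n} X_k²) ≤ 1`; the second is dominated by
`E exp (-y/(2σ²) ∑_{k<n} X_k²) ≤ (1 + y)^(-n/2)`. Both follow by integrating out the Gaussian
innovations one at a time, each being independent of the past; for `X_0` one uses `τ² ≥ σ²`.
The equation defining `y_x` turns the resulting exponent `n x² log (1 + y) / (2 (y + x²))` into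
`n x² / (2 (1 + y))`.
-/

open MeasureTheory ProbabilityTheory Real Finset
open scoped NNReal ENNReal

lemma lintegral_exp_mul_sub_mul_sq_gaussianReal {v : ℝ≥0} (hv : v ≠ 0) (a : ℝ) {b : ℝ}
    (hb : 0 ≤ b) :
    ∫⁻ z, ENNReal.ofReal (exp (a * z - b * z ^ 2)) ∂gaussianReal 0 v
      = ENNReal.ofReal ((√(1 + 2 * b * v))⁻¹ * exp (a ^ 2 * v / (2 * (1 + 2 * b * v)))) := by
  have hv₀ : (0 : ℝ) < v := by positivity
  set κ : ℝ := 1 + 2 * b * v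
  have hκ : 0 < κ := by positivity
  set C : ℝ := (√(2 * π * v))⁻¹ * exp (a ^ 2 * v / (2 * κ)) with hC
  have hsquare : ∀ z, gaussianPDFReal 0 v z * exp (a * z - b * z ^ 2)
      = C * exp (-(κ / (2 * v)) * (z - a * v / κ) ^ 2) := by
    intro z
    rw [gaussianPDFReal, hC, mul_assoc, ← exp_add, mul_assoc _ (rexp _), ← exp_add]
    congr 2
    field_simp
    ring
  have hint : Integrable fun z => C * exp (-(κ / (2 * v)) * (z - a * v / κ) ^ 2) :=
    ((integrable_exp_neg_mul_sq (by positivity)).comp_sub_right _).const_mul C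
  rw [gaussianReal_of_var_ne_zero _ hv,
    lintegral_withDensity_eq_lintegral_mul _ (measurable_gaussianPDF _ _) (by fun_prop)]
  simp_rw [Pi.mul_apply, gaussianPDF, ← ENNReal.ofReal_mul (gaussianPDFReal_nonneg _ _ _),
    hsquare]
  rw [← ofReal_integral_eq_lintegral_ofReal hint (ae_of_all _ fun z => by positivity),
    integral_const_mul, integral_sub_right_eq_self (fun z => exp (-(κ / (2 * v)) * z ^ 2)),
    integral_gaussian]
  congr 1
  have hsqrt : √(π / (κ / (2 * v))) = √(2 * π * v) * (√κ)⁻¹ := by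
    rw [← Real.sqrt_inv, ← Real.sqrt_mul (by positivity)]
    congr 1
    field_simp
  have : 0 < √(2 * π * v) := by positivity
  rw [hsqrt, hC]
  field_simp

lemma lintegral_exp_mul_gaussianReal {v : ℝ≥0} (hv : v ≠ 0) (a : ℝ) :
    ∫⁻ z, ENNReal.ofReal (exp (a * z)) ∂gaussianReal 0 v
      = ENNReal.ofReal (exp (a ^ 2 * v / 2)) := by
  simpa using lintegral_exp_mul_sub_mul_sq_gaussianReal hv a le_rfl

lemma lintegral_exp_neg_mul_add_sq_gaussianReal_le {v : ℝ≥0} (hv : v ≠ 0) {b : ℝ} (hb : 0 ≤ b)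
    (m : ℝ) :
    ∫⁻ z, ENNReal.ofReal (exp (-(b * (m + z) ^ 2))) ∂gaussianReal 0 v
      ≤ ENNReal.ofReal ((√(1 + 2 * b * v))⁻¹) := by
  have hκ : (0 : ℝ) < 1 + 2 * b * v := by positivity
  have hsplit : ∀ z, ENNReal.ofReal (exp (-(b * (m + z) ^ 2))) = ENNReal.ofReal (exp (-(b * m ^ 2)))
      * ENNReal.ofReal (exp (-(2 * b * m) * z - b * z ^ 2)) := by
    intro z
    rw [← ENNReal.ofReal_mul (by positivity), ← exp_add]
    ring_nf
  simp_rw [hsplit]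
  rw [lintegral_const_mul' _ _ ENNReal.ofReal_ne_top,
    lintegral_exp_mul_sub_mul_sq_gaussianReal hv _ hb, ← ENNReal.ofReal_mul (by positivity)]
  have hexp : -(b * m ^ 2) + (-(2 * b * m)) ^ 2 * v / (2 * (1 + 2 * b * v)) ≤ 0 := by
    rw [neg_add_nonpos_iff, div_le_iff₀ (by positivity)]
    nlinarith [mul_nonneg (mul_nonneg hb (sq_nonneg m)) (NNReal.coe_nonneg v)]
  rw [mul_left_comm, ← exp_add]
  exact ENNReal.ofReal_le_ofReal (mul_le_of_le_one_right (by positivity) (exp_le_one_iff.2 hexp))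

lemma lintegral_exp_mul_sub_half_sq_gaussianReal {v : ℝ≥0} (hv : v ≠ 0) (a : ℝ) :
    ∫⁻ z, ENNReal.ofReal (exp (a * z - a ^ 2 * v / 2)) ∂gaussianReal 0 v = 1 := by
  simp_rw [sub_eq_add_neg, exp_add, ENNReal.ofReal_mul (exp_pos _).le]
  rw [lintegral_mul_const' _ _ ENNReal.ofReal_ne_top, lintegral_exp_mul_gaussianReal hv,
    ← ENNReal.ofReal_mul (exp_pos _).le, ← exp_add, add_neg_cancel, exp_zero, ENNReal.ofReal_one]

lemma lintegral_exp_neg_mul_sq_le_of_map_eq_gaussianReal {Ω : Type*} {m0 : MeasurableSpace Ω}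
    {μ : Measure Ω} {Y : Ω → ℝ} (hY : Measurable Y) {v w : ℝ≥0} (hv : v ≠ 0) (hvw : v ≤ w)
    (hYgauss : μ.map Y = gaussianReal 0 w) {b : ℝ} (hb : 0 ≤ b) :
    ∫⁻ ω, ENNReal.ofReal (exp (-(b * Y ω ^ 2))) ∂μ ≤ ENNReal.ofReal ((√(1 + 2 * b * v))⁻¹) :=
  calc _ = ∫⁻ z, ENNReal.ofReal (exp (-(b * (0 + z) ^ 2))) ∂μ.map Y := by
        rw [lintegral_map (by fun_prop) hY]
        simp only [zero_add]
    _ ≤ ENNReal.ofReal ((√(1 + 2 * b * w))⁻¹) := by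
        rw [hYgauss]
        exact lintegral_exp_neg_mul_add_sq_gaussianReal_le (ne_bot_of_le_ne_bot hv hvw) hb 0
    _ ≤ ENNReal.ofReal ((√(1 + 2 * b * v))⁻¹) :=
        ENNReal.ofReal_le_ofReal (inv_anti₀ (by positivity) (sqrt_le_sqrt (by gcongr)))

section Independence

variable {Ω α β : Type*} {F m0 : MeasurableSpace Ω} [MeasurableSpace α] [MeasurableSpace β]
  {μ : Measure Ω} [IsFiniteMeasure μ]

lemma ProbabilityTheory.IndepFun.lintegral_comp_eq_lintegral_lintegral_map {U : Ω → α}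
    {Y : Ω → β} (hUY : IndepFun U Y μ) (hU : Measurable U) (hY : Measurable Y)
    {f : α × β → ℝ≥0∞} (hf : Measurable f) :
    ∫⁻ ω, f (U ω, Y ω) ∂μ = ∫⁻ ω, ∫⁻ z, f (U ω, z) ∂μ.map Y ∂μ :=
  calc ∫⁻ ω, f (U ω, Y ω) ∂μ = ∫⁻ p, f p ∂μ.map (fun ω => (U ω, Y ω)) :=
        (lintegral_map hf (hU.prodMk hY)).symm
    _ = ∫⁻ p, f p ∂(μ.map U).prod (μ.map Y) := by
        rw [hUY.map_prod_eq_prod_map_map hU.aemeasurable hY.aemeasurable]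
    _ = ∫⁻ u, ∫⁻ z, f (u, z) ∂μ.map Y ∂μ.map U := lintegral_prod _ hf.aemeasurable
    _ = ∫⁻ ω, ∫⁻ z, f (U ω, z) ∂μ.map Y ∂μ := lintegral_map hf.lintegral_prod_right' hU

lemma lintegral_mul_comp_le_of_indep (hF : F ≤ m0) {Y : Ω → β}
    (hY : Measurable Y) (hFY : Indep F (MeasurableSpace.comap Y inferInstance) μ)
    {G : Ω → ℝ≥0∞} (hG : Measurable[F] G) {A : Ω → α} (hA : Measurable[F] A)
    {h : α × β → ℝ≥0∞} (hh : Measurable h) {C : ℝ≥0∞}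
    (hC : ∀ a, ∫⁻ z, h (a, z) ∂μ.map Y ≤ C) :
    ∫⁻ ω, G ω * h (A ω, Y ω) ∂μ ≤ C * ∫⁻ ω, G ω ∂μ := by
  have hGA : Measurable[F] fun ω => (G ω, A ω) := hG.prodMk hA
  have hindep : IndepFun (fun ω => (G ω, A ω)) Y μ :=
    (IndepFun_iff_Indep _ _ _).2 (indep_of_indep_of_le_left hFY hGA.comap_le)
  rw [hindep.lintegral_comp_eq_lintegral_lintegral_map (f := fun p => p.1.1 * h (p.1.2, p.2))
    (hGA.mono hF le_rfl) hY (measurable_fst.fst.mul (hh.comp (measurable_fst.snd.prodMk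
      measurable_snd)))]
  calc ∫⁻ ω, ∫⁻ z, G ω * h (A ω, z) ∂μ.map Y ∂μ ≤ ∫⁻ ω, G ω * C ∂μ := by
        refine lintegral_mono fun ω => ?_
        rw [lintegral_const_mul (f := fun z => h (A ω, z)) _ (hh.comp measurable_prodMk_left)]
        exact mul_le_mul_right (hC _) _
    _ = C * ∫⁻ ω, G ω ∂μ := by rw [lintegral_mul_const _ (hG.mono hF le_rfl), mul_comm]

end Independence

lemma ENNReal.ofReal_exp_rpow (r t : ℝ) :
    ENNReal.ofReal (exp t) ^ r = ENNReal.ofReal (exp (r * t)) := by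
  rw [ENNReal.ofReal_rpow_of_pos (exp_pos _), ← exp_mul, mul_comm]

lemma measure_nonneg_add_le_lintegral_exp_rpow {Ω : Type*} {m0 : MeasurableSpace Ω}
    {μ : Measure Ω} {f g : Ω → ℝ} (hf : AEMeasurable f μ) (hg : AEMeasurable g μ) {p q : ℝ}
    (hpq : p.HolderConjugate q) :
    μ {ω | 0 ≤ f ω / p + g ω / q} ≤ (∫⁻ ω, ENNReal.ofReal (exp (f ω)) ∂μ) ^ (1 / p)
      * (∫⁻ ω, ENNReal.ofReal (exp (g ω)) ∂μ) ^ (1 / q) := by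
  have hexp_rpow : ∀ {r : ℝ}, r ≠ 0 → ∀ t,
      ENNReal.ofReal (exp (t / r)) ^ r = ENNReal.ofReal (exp t) := fun hr t => by
    rw [ENNReal.ofReal_exp_rpow, mul_div_cancel₀ _ hr]
  calc μ {ω | 0 ≤ f ω / p + g ω / q}
      ≤ μ {ω | 1 ≤ ENNReal.ofReal (exp (f ω / p)) * ENNReal.ofReal (exp (g ω / q))} := by
        refine measure_mono fun ω hω => ?_
        rw [Set.mem_ofPred_eq, ← ENNReal.ofReal_mul (exp_pos _).le, ← exp_add,
          ENNReal.one_le_ofReal]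
        exact one_le_exp hω
    _ ≤ ∫⁻ ω, ENNReal.ofReal (exp (f ω / p)) * ENNReal.ofReal (exp (g ω / q)) ∂μ := by
        simpa using mul_meas_ge_le_lintegral₀ (by fun_prop) 1
    _ ≤ _ := by
        simpa only [Pi.mul_apply, Function.comp_apply, hexp_rpow hpq.ne_zero,
          hexp_rpow hpq.symm.ne_zero] using
          ENNReal.lintegral_mul_le_Lp_mul_Lq μ hpq
            (measurable_exp.comp_aemeasurable (hf.div_const p)).ennreal_ofReal
            (measurable_exp.comp_aemeasurable (hg.div_const q)).ennreal_ofReal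

lemma mul_le_abs_of_add_abs_le_abs_div_sub {θ x s a m : ℝ} (hx : 0 < x) (hs : 0 ≤ s)
    (h : x + |θ| ≤ |(θ * s + m) / (s + a ^ 2) - θ|) : x * (s + a ^ 2) ≤ |m| := by
  rcases (add_nonneg hs (sq_nonneg a)).eq_or_lt with hS | hS
  · rw [← hS, div_zero, zero_sub, abs_neg] at h
    linarith
  have hdiff : (θ * s + m) / (s + a ^ 2) - θ = (m - θ * a ^ 2) / (s + a ^ 2) := by
    field_simp
    ring
  rw [hdiff, abs_div, abs_of_pos hS, le_div_iff₀ hS] at h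
  have hm : |m - θ * a ^ 2| ≤ |m| + |θ| * a ^ 2 :=
    (abs_sub _ _).trans_eq (by rw [abs_mul, abs_of_nonneg (sq_nonneg a)])
  have ha : |θ| * a ^ 2 ≤ |θ| * (s + a ^ 2) :=
    mul_le_mul_of_nonneg_left (le_add_of_nonneg_left hs) (abs_nonneg θ)
  nlinarith

section Autoregressive

variable {Ω : Type*} {m0 : MeasurableSpace Ω} {μ : Measure Ω} {θ : ℝ} {X ε : ℕ → Ω → ℝ}

lemma sum_Icc_pred_mul_eq_of_rec (hrec : ∀ k ω, X (k + 1) ω = θ * X k ω + ε (k + 1) ω)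
    (n : ℕ) (ω : Ω) :
    ∑ k ∈ Icc 1 n, X (k - 1) ω * X k ω
      = θ * ∑ k ∈ range n, X k ω ^ 2 + ∑ k ∈ range n, X k ω * ε (k + 1) ω := by
  rw [← Ico_add_one_right_eq_Icc, sum_Ico_eq_sum_range, mul_sum, ← sum_add_distrib]
  refine sum_congr (by simp) fun k _ => ?_
  rw [Nat.add_comm 1 k, Nat.add_sub_cancel, hrec]
  ring

abbrev pastSigma (X ε : ℕ → Ω → ℝ) (k : ℕ) : MeasurableSpace Ω :=
  ⨆ j ∈ Set.Iic k, MeasurableSpace.comap (if j = 0 then X 0 else ε j) inferInstance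

lemma pastSigma_le (hX0 : Measurable (X 0)) (hε : ∀ k, Measurable (ε k)) (k : ℕ) :
    pastSigma X ε k ≤ m0 :=
  iSup₂_le fun j _ => by
    split_ifs
    exacts [hX0.comap_le, (hε j).comap_le]

lemma comap_le_pastSigma {j k : ℕ} (hjk : j ≤ k) :
    MeasurableSpace.comap (if j = 0 then X 0 else ε j) inferInstance ≤ pastSigma X ε k :=
  le_iSup₂ (f := fun j (_ : j ∈ Set.Iic k) =>
    MeasurableSpace.comap (if j = 0 then X 0 else ε j) inferInstance) j hjk

lemma measurable_noise_pastSigma {j k : ℕ} (hj : 1 ≤ j) (hjk : j ≤ k) :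
    Measurable[pastSigma X ε k] (ε j) :=
  Measurable.of_comap_le (by simpa only [if_neg (by omega : j ≠ 0)] using comap_le_pastSigma hjk)

lemma measurable_pastSigma (hrec : ∀ k ω, X (k + 1) ω = θ * X k ω + ε (k + 1) ω) {j k : ℕ}
    (hjk : j ≤ k) : Measurable[pastSigma X ε k] (X j) := by
  induction j with
  | zero => exact Measurable.of_comap_le (by simpa using comap_le_pastSigma (ε := ε) hjk)
  | succ j ih =>
    rw [show X (j + 1) = fun ω => θ * X j ω + ε (j + 1) ω from funext (hrec j)]
    exact (measurable_const.mul (ih (by omega))).add (measurable_noise_pastSigma le_add_self hjk)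

lemma indep_pastSigma_noise (hX0 : Measurable (X 0)) (hε : ∀ k, Measurable (ε k))
    (hindep : iIndepFun (fun k => if k = 0 then X 0 else ε k) μ) (k : ℕ) :
    Indep (pastSigma X ε k) (MeasurableSpace.comap (ε (k + 1)) inferInstance) μ := by
  have h := indep_iSup_of_disjoint (fun j => ?_) ((iIndepFun_iff_iIndep _ _ _).1 hindep)
    (S := Set.Iic k) (T := {k + 1}) (by simp)
  · simpa only [_root_.iSup_singleton, if_neg k.succ_ne_zero] using h
  · split_ifs
    exacts [hX0.comap_le, (hε j).comap_le]

variable {σ2 : ℝ≥0}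

lemma lintegral_mul_comp_noise_le [IsFiniteMeasure μ]
    (hX0 : Measurable (X 0)) (hε : ∀ k, Measurable (ε k))
    (hindep : iIndepFun (fun k => if k = 0 then X 0 else ε k) μ)
    (hrec : ∀ k ω, X (k + 1) ω = θ * X k ω + ε (k + 1) ω)
    (hεgauss : ∀ k, 1 ≤ k → μ.map (ε k) = gaussianReal 0 σ2) {k : ℕ} {G : Ω → ℝ≥0∞}
    (hG : Measurable[pastSigma X ε k] G) {h : ℝ × ℝ → ℝ≥0∞} (hh : Measurable h) {C : ℝ≥0∞}
    (hC : ∀ a, ∫⁻ z, h (a, z) ∂gaussianReal 0 σ2 ≤ C) :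
    ∫⁻ ω, G ω * h (X k ω, ε (k + 1) ω) ∂μ ≤ C * ∫⁻ ω, G ω ∂μ :=
  lintegral_mul_comp_le_of_indep (pastSigma_le hX0 hε k) (hε _)
    (indep_pastSigma_noise hX0 hε hindep k) hG (measurable_pastSigma hrec le_rfl) hh
    (by rwa [hεgauss _ k.succ_pos])

lemma lintegral_exp_sum_mul_noise_le_one [IsProbabilityMeasure μ]
    (hX0 : Measurable (X 0)) (hε : ∀ k, Measurable (ε k))
    (hindep : iIndepFun (fun k => if k = 0 then X 0 else ε k) μ)
    (hrec : ∀ k ω, X (k + 1) ω = θ * X k ω + ε (k + 1) ω) (hσ2 : σ2 ≠ 0)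
    (hεgauss : ∀ k, 1 ≤ k → μ.map (ε k) = gaussianReal 0 σ2) (c : ℝ) (N : ℕ) :
    ∫⁻ ω, ENNReal.ofReal (exp (c * ∑ k ∈ range N, X k ω * ε (k + 1) ω
      - c ^ 2 * σ2 / 2 * ∑ k ∈ range N, X k ω ^ 2)) ∂μ ≤ 1 := by
  induction N with
  | zero => simp
  | succ N ih =>
    set Z : Ω → ℝ≥0∞ := fun ω => ENNReal.ofReal (exp (c * ∑ k ∈ range N, X k ω * ε (k + 1) ω
      - c ^ 2 * σ2 / 2 * ∑ k ∈ range N, X k ω ^ 2))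
    have hZ : Measurable[pastSigma X ε N] Z := by
      refine (measurable_exp.comp (measurable_const.mul (Finset.measurable_sum _ fun k hk => ?_)
        |>.sub (measurable_const.mul (Finset.measurable_sum _ fun k hk => ?_)))).ennreal_ofReal
      · have hk := Finset.mem_range.1 hk
        exact (measurable_pastSigma hrec hk.le).mul (measurable_noise_pastSigma le_add_self hk)
      · exact (measurable_pastSigma hrec (Finset.mem_range.1 hk).le).pow_const 2
    have hsplit : ∀ ω, ENNReal.ofReal (exp (c * ∑ k ∈ range (N + 1), X k ω * ε (k + 1) ω
        - c ^ 2 * σ2 / 2 * ∑ k ∈ range (N + 1), X k ω ^ 2))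
        = Z ω * ENNReal.ofReal (exp (c * X N ω * ε (N + 1) ω - (c * X N ω) ^ 2 * σ2 / 2)) := by
      intro ω
      rw [← ENNReal.ofReal_mul (exp_pos _).le, ← exp_add, sum_range_succ, sum_range_succ]
      ring_nf
    calc _ = ∫⁻ ω, Z ω * ENNReal.ofReal (exp (c * X N ω * ε (N + 1) ω
            - (c * X N ω) ^ 2 * σ2 / 2)) ∂μ := lintegral_congr hsplit
      _ ≤ 1 * ∫⁻ ω, Z ω ∂μ :=
        lintegral_mul_comp_noise_le (h := fun p => ENNReal.ofReal (exp (c * p.1 * p.2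
          - (c * p.1) ^ 2 * σ2 / 2))) hX0 hε hindep hrec hεgauss hZ (by fun_prop)
          fun a => (lintegral_exp_mul_sub_half_sq_gaussianReal hσ2 (c * a)).le
      _ ≤ 1 := by rwa [one_mul]

lemma lintegral_exp_neg_mul_sum_sq_le [IsProbabilityMeasure μ]
    (hX0 : Measurable (X 0)) (hε : ∀ k, Measurable (ε k))
    (hindep : iIndepFun (fun k => if k = 0 then X 0 else ε k) μ)
    (hrec : ∀ k ω, X (k + 1) ω = θ * X k ω + ε (k + 1) ω) (hσ2 : σ2 ≠ 0)
    (hεgauss : ∀ k, 1 ≤ k → μ.map (ε k) = gaussianReal 0 σ2) {τ2 : ℝ≥0} (hτ2 : σ2 ≤ τ2)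
    (hX0gauss : μ.map (X 0) = gaussianReal 0 τ2) {b : ℝ} (hb : 0 ≤ b) (N : ℕ) :
    ∫⁻ ω, ENNReal.ofReal (exp (-(b * ∑ k ∈ range N, X k ω ^ 2))) ∂μ
      ≤ ENNReal.ofReal ((√(1 + 2 * b * σ2))⁻¹) ^ N := by
  set r := ENNReal.ofReal ((√(1 + 2 * b * σ2))⁻¹)
  rcases N with _ | N
  · simp
  induction N with
  | zero => simpa using lintegral_exp_neg_mul_sq_le_of_map_eq_gaussianReal hX0 hσ2 hτ2 hX0gauss hb
  | succ N ih =>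
    set V : Ω → ℝ≥0∞ := fun ω => ENNReal.ofReal (exp (-(b * ∑ k ∈ range (N + 1), X k ω ^ 2)))
    have hV : Measurable[pastSigma X ε N] V :=
      (measurable_exp.comp (measurable_const.mul (Finset.measurable_sum _ fun k hk =>
        (measurable_pastSigma hrec (Finset.mem_range_succ_iff.1 hk)).pow_const 2)).neg)
        |>.ennreal_ofReal
    have hsplit : ∀ ω, ENNReal.ofReal (exp (-(b * ∑ k ∈ range (N + 1 + 1), X k ω ^ 2)))
        = V ω * ENNReal.ofReal (exp (-(b * (θ * X N ω + ε (N + 1) ω) ^ 2))) := by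
      intro ω
      rw [← ENNReal.ofReal_mul (exp_pos _).le, ← exp_add, sum_range_succ _ (N + 1), hrec]
      ring_nf
    calc _ = ∫⁻ ω, V ω * ENNReal.ofReal (exp (-(b * (θ * X N ω + ε (N + 1) ω) ^ 2))) ∂μ :=
          lintegral_congr hsplit
      _ ≤ r * ∫⁻ ω, V ω ∂μ :=
        lintegral_mul_comp_noise_le
          (h := fun p => ENNReal.ofReal (exp (-(b * (θ * p.1 + p.2) ^ 2))))
          hX0 hε hindep hrec hεgauss hV (by fun_prop)
          fun a => lintegral_exp_neg_mul_add_sq_gaussianReal_le hσ2 hb (θ * a)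
      _ ≤ r * r ^ (N + 1) := by gcongr
      _ = r ^ (N + 1 + 1) := (pow_succ' _ _).symm

lemma measure_mul_sum_sq_le_sign_mul_sum_le [IsProbabilityMeasure μ]
    (hX : ∀ k, Measurable (X k)) (hε : ∀ k, Measurable (ε k))
    (hindep : iIndepFun (fun k => if k = 0 then X 0 else ε k) μ)
    (hrec : ∀ k ω, X (k + 1) ω = θ * X k ω + ε (k + 1) ω) (hσ2 : σ2 ≠ 0)
    (hεgauss : ∀ k, 1 ≤ k → μ.map (ε k) = gaussianReal 0 σ2) {τ2 : ℝ≥0} (hτ2 : σ2 ≤ τ2)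
    (hX0gauss : μ.map (X 0) = gaussianReal 0 τ2) (n : ℕ) {x y : ℝ} (hx : 0 < x) (hy : 0 < y)
    {s : ℝ} (hs : s ^ 2 = 1) :
    μ {ω | x * ∑ k ∈ range (n + 1), X k ω ^ 2 ≤ s * ∑ k ∈ range n, X k ω * ε (k + 1) ω}
      ≤ ENNReal.ofReal (exp (-(n * x ^ 2 * log (1 + y) / (2 * (y + x ^ 2))))) := by
  have hv : (0 : ℝ) < σ2 := NNReal.coe_pos.2 (pos_iff_ne_zero.2 hσ2)
  set p := (y + x ^ 2) / y
  set q := (y + x ^ 2) / x ^ 2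
  have hpq : p.HolderConjugate q := by
    refine Real.holderConjugate_iff.2 ⟨(one_lt_div hy).2 (lt_add_of_pos_right y (by positivity)),
      ?_⟩
    simp only [p, q, inv_div]
    field_simp
  set c := s * x / σ2
  set b := y / (2 * σ2)
  set M := fun ω => ∑ k ∈ range n, X k ω * ε (k + 1) ω
  set S := fun ω => ∑ k ∈ range n, X k ω ^ 2
  have hevent : {ω | x * ∑ k ∈ range (n + 1), X k ω ^ 2 ≤ s * M ω}
      ⊆ {ω | 0 ≤ (c * M ω - c ^ 2 * σ2 / 2 * S ω) / p + -(b * (S ω + 2 * X n ω ^ 2)) / q} := by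
    intro ω hω
    rw [Set.mem_ofPred_eq, sum_range_succ] at hω
    have hsplit : (c * M ω - c ^ 2 * σ2 / 2 * S ω) / p + -(b * (S ω + 2 * X n ω ^ 2)) / q
        = x / (p * σ2) * (s * M ω - x * (S ω + X n ω ^ 2)) := by
      simp only [p, q, c, b]
      field_simp
      linear_combination (-(x * S ω)) * hs
    rw [Set.mem_ofPred_eq, hsplit]
    exact mul_nonneg (by positivity) (sub_nonneg.2 hω)
  have hS : Measurable S := Finset.measurable_sum _ fun k _ => (hX k).pow_const 2
  have hM : Measurable M := Finset.measurable_sum _ fun k _ => (hX k).mul (hε _)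
  calc _ ≤ _ := measure_mono hevent
    _ ≤ _ := measure_nonneg_add_le_lintegral_exp_rpow (by fun_prop) (by fun_prop) hpq
    _ ≤ 1 ^ (1 / p) * (ENNReal.ofReal ((√(1 + 2 * b * σ2))⁻¹) ^ n) ^ (1 / q) := by
        gcongr
        · exact lintegral_exp_sum_mul_noise_le_one (hX 0) hε hindep hrec hσ2 hεgauss c n
        · refine le_trans (lintegral_mono fun ω => ENNReal.ofReal_le_ofReal (exp_le_exp.2 ?_))
            (lintegral_exp_neg_mul_sum_sq_le (hX 0) hε hindep hrec hσ2 hεgauss hτ2 hX0gauss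
              (by positivity) n)
          have : 0 ≤ b * X n ω ^ 2 := by positivity
          linarith
    _ = ENNReal.ofReal (exp (-(n * x ^ 2 * log (1 + y) / (2 * (y + x ^ 2))))) := by
        have hsqrt : (√(1 + 2 * b * σ2))⁻¹ = exp (-(log (1 + y) / 2)) := by
          rw [show 1 + 2 * b * σ2 = 1 + y by simp only [b]; field_simp, exp_neg,
            ← log_sqrt (by positivity), exp_log (by positivity)]
        rw [ENNReal.one_rpow, one_mul, hsqrt, ← ENNReal.ofReal_pow (exp_pos _).le,
          ← exp_nat_mul, ENNReal.ofReal_exp_rpow]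
        congr 2
        simp only [q]
        field_simp

end Autoregressive

theorem autoregressive_yule_walker_exponential_inequality_general
    {Ω : Type*} {m0 : MeasurableSpace Ω} {μ : Measure Ω} [IsProbabilityMeasure μ]
    (θ : ℝ) (X ε : ℕ → Ω → ℝ)
    (hXmeas : ∀ k, Measurable (X k)) (hεmeas : ∀ k, Measurable (ε k))
    -- the noise (ε_n)_{n ≥ 1} is i.i.d. N(0, σ²) with σ² > 0
    {σ2 : NNReal} (hσ2 : 0 < σ2)
    (hεgauss : ∀ k, 1 ≤ k → μ.map (ε k) = gaussianReal 0 σ2)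
    -- X 0 is N(0, τ²) distributed with τ² ≥ σ²
    {τ2 : NNReal} (hτ2 : σ2 ≤ τ2) (hX0gauss : μ.map (X 0) = gaussianReal 0 τ2)
    -- X 0 and the noise sequence are jointly independent
    (hindep : iIndepFun
      (fun k : ℕ => if k = 0 then X 0 else ε k) μ)
    -- the autoregressive model
    (hrec : ∀ k : ℕ, ∀ ω, X (k + 1) ω = θ * X k ω + ε (k + 1) ω)
    (n : ℕ) {x yx : ℝ} (hx : 0 < x) (hyx : 0 < yx)
    -- y_x is the (unique) positive solution of h(y_x) = x², h(y) = (1+y)log(1+y) − y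
    (hsol : (1 + yx) * Real.log (1 + yx) - yx = x ^ 2) :
    μ {ω | x + |θ| ≤ |(∑ k ∈ Finset.Icc 1 n, X (k - 1) ω * X k ω) /
          (∑ k ∈ Finset.range (n + 1), (X k ω) ^ 2) - θ|}
      ≤ ENNReal.ofReal (2 * Real.exp (-(n : ℝ) * x ^ 2 / (2 * (1 + yx)))) := by
  set tail : ℝ → Set Ω := fun s =>
    {ω | x * ∑ k ∈ range (n + 1), X k ω ^ 2 ≤ s * ∑ k ∈ range n, X k ω * ε (k + 1) ω}
  have hevent : {ω | x + |θ| ≤ |(∑ k ∈ Icc 1 n, X (k - 1) ω * X k ω) /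
      (∑ k ∈ range (n + 1), X k ω ^ 2) - θ|} ⊆ tail 1 ∪ tail (-1) := by
    intro ω hω
    rw [Set.mem_ofPred_eq, sum_Icc_pred_mul_eq_of_rec hrec, sum_range_succ] at hω
    have h := mul_le_abs_of_add_abs_le_abs_div_sub hx (sum_nonneg fun k _ => sq_nonneg (X k ω)) hω
    rw [← sum_range_succ, le_abs] at h
    simpa only [tail, Set.mem_union, Set.mem_ofPred_eq, one_mul, neg_one_mul] using h
  have htail : ∀ s : ℝ, s ^ 2 = 1 →
      μ (tail s) ≤ ENNReal.ofReal (exp (-(n : ℝ) * x ^ 2 / (2 * (1 + yx)))) := fun s hs => by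
    have hlog : log (1 + yx) = (yx + x ^ 2) / (1 + yx) := by
      rw [eq_div_iff (by positivity)]
      linarith
    have := measure_mul_sum_sq_le_sign_mul_sum_le hXmeas hεmeas hindep hrec hσ2.ne' hεgauss
      hτ2 hX0gauss n hx hyx hs
    rwa [hlog, show -(n * x ^ 2 * ((yx + x ^ 2) / (1 + yx)) / (2 * (yx + x ^ 2)))
      = -(n : ℝ) * x ^ 2 / (2 * (1 + yx)) by field_simp] at this
  calc _ ≤ μ (tail 1 ∪ tail (-1)) := measure_mono hevent
    _ ≤ μ (tail 1) + μ (tail (-1)) := measure_union_le _ _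
    _ ≤ _ := by
      rw [two_mul, ENNReal.ofReal_add (exp_pos _).le (exp_pos _).le]
      exact add_le_add (htail 1 (one_pow 2)) (htail (-1) (by norm_num))

/-- Corollary 5.2, inequality (5.8): exponential inequality for the Yule–Walker estimator of
the Gaussian autoregressive process `X_{k+1} = θ X_k + ε_{k+1}`. For all `n ≥ 1` and `x > 0`,
`P(|θ̃_n − θ| ≥ x + |θ|) ≤ 2 exp(−n x²/(2(1 + y_x)))` where `y_x > 0` solves
`(1+y_x)log(1+y_x) − y_x = x²`. -/
theorem autoregressive_yule_walker_exponential_inequality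
    {Ω : Type*} {m0 : MeasurableSpace Ω} {μ : Measure Ω} [IsProbabilityMeasure μ]
    (θ : ℝ) (X ε : ℕ → Ω → ℝ)
    (hXmeas : ∀ k, Measurable (X k)) (hεmeas : ∀ k, Measurable (ε k))
    -- the noise (ε_n)_{n ≥ 1} is i.i.d. N(0, σ²) with σ² > 0
    {σ2 : NNReal} (hσ2 : 0 < σ2)
    (hεgauss : ∀ k, 1 ≤ k → μ.map (ε k) = gaussianReal 0 σ2)
    -- X 0 is N(0, τ²) distributed with τ² ≥ σ²
    {τ2 : NNReal} (hτ2 : σ2 ≤ τ2) (hX0gauss : μ.map (X 0) = gaussianReal 0 τ2)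
    -- X 0 and the noise sequence are jointly independent
    (hindep : iIndepFun
      (fun k : ℕ => if k = 0 then X 0 else ε k) μ)
    -- the autoregressive model
    (hrec : ∀ k : ℕ, ∀ ω, X (k + 1) ω = θ * X k ω + ε (k + 1) ω)
    (n : ℕ) (hn : 1 ≤ n) {x yx : ℝ} (hx : 0 < x) (hyx : 0 < yx)
    -- y_x is the (unique) positive solution of h(y_x) = x², h(y) = (1+y)log(1+y) − y
    (hsol : (1 + yx) * Real.log (1 + yx) - yx = x ^ 2) :
    μ {ω | x + |θ| ≤ |(∑ k ∈ Finset.Icc 1 n, X (k - 1) ω * X k ω) /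
          (∑ k ∈ Finset.range (n + 1), (X k ω) ^ 2) - θ|}
      ≤ ENNReal.ofReal (2 * Real.exp (-(n : ℝ) * x ^ 2 / (2 * (1 + yx)))) :=
  autoregressive_yule_walker_exponential_inequality_general (m0 := m0) θ X ε hXmeas hεmeas hσ2
    hεgauss hτ2 hX0gauss hindep hrec n hx hyx hsol
end
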